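/- arXiv:math/0506358 — 3 statements merged into one kernel-verified Lean document; each statement's English description precedes it below -/
import Mathlib

section
/- For every permutation σ of {1,…,n}, applying Patience Sorting to the reverse patience word of the pile configuration of σ returns the same pile configuration: R(RPW(R(σ))) = R(σ). -/
/-- One step of Patience Sorting: place card `c` on the leftmost pile whose top
(head) is larger than `c`, or start a new pile on the right.  Piles are stored
top-first, so each pile is an increasing list whose head is the top (smallest) card. -/
def PSinsert (c : ℕ) : List (List ℕ) → List (List ℕ)
  | [] => [[c]]
  | [] :: ps => [] :: PSinsert c ps
  | (x :: p) :: ps =>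
      if c < x then (c :: x :: p) :: ps else (x :: p) :: PSinsert c ps

/-- The pile configuration `R(w)` produced by Patience Sorting applied to the word `w`. -/
def PSpiles (w : List ℕ) : List (List ℕ) :=
  w.foldl (fun ps c => PSinsert c ps) []

/-- The one-line word (with values `1,…,n`) of a permutation of `Fin n`. -/
def permWord {n : ℕ} (σ : Equiv.Perm (Fin n)) : List ℕ :=
  List.ofFn fun i => (σ i : ℕ) + 1

/-- The reverse patience word of a pile configuration: concatenate the piles
left to right, each pile written in decreasing order (bottom to top).
Since piles are stored top-first (increasing), each pile is reversed. -/
def RPW (P : List (List ℕ)) : List ℕ := (P.map List.reverse).flatten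

/-!
Patience Sorting keeps every pile strictly increasing from the top down, and the top of each pile
is at most every card of the piles to its right. For any configuration with these two properties,
Patience Sorting of its reverse patience word rebuilds it pile by pile: the cards of a pile arrive
bottom first, each one passes over the earlier piles (whose tops are no larger) and lands on the
pile being rebuilt, whose top is larger.
-/

def TopsLE (A : List (List ℕ)) (s : List ℕ) : Prop :=
  ∀ p ∈ A, ∃ a ∈ p.head?, ∀ x ∈ s, a ≤ x

lemma TopsLE.mono {A : List (List ℕ)} {s t : List ℕ} (h : TopsLE A s) (hts : t ⊆ s) :
    TopsLE A t := fun p hp => by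
  obtain ⟨a, ha, has⟩ := h p hp
  exact ⟨a, ha, fun x hx => has x (hts hx)⟩

structure IsPileConfig (P : List (List ℕ)) : Prop where
  ne_nil : ∀ p ∈ P, p ≠ []
  sorted : ∀ p ∈ P, p.Pairwise (· < ·)
  head_le : P.Pairwise fun p q => ∀ a ∈ p.head?, ∀ x ∈ q, a ≤ x

lemma isPileConfig_cons_cons {x : ℕ} {p : List ℕ} {P : List (List ℕ)} :
    IsPileConfig ((x :: p) :: P) ↔
      (x :: p).Pairwise (· < ·) ∧ (∀ y ∈ P.flatten, x ≤ y) ∧ IsPileConfig P := by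
  constructor
  · rintro ⟨hne, hsorted, hhead⟩
    obtain ⟨hhead, hrest⟩ := List.pairwise_cons.mp hhead
    refine ⟨(List.forall_mem_cons.mp hsorted).1, fun y hy => ?_,
      ⟨(List.forall_mem_cons.mp hne).2, (List.forall_mem_cons.mp hsorted).2, hrest⟩⟩
    obtain ⟨q, hq, hyq⟩ := List.mem_flatten.mp hy
    exact hhead q hq x rfl y hyq
  · rintro ⟨hsorted, hhead, hP⟩
    refine ⟨List.forall_mem_cons.mpr ⟨List.cons_ne_nil x p, hP.ne_nil⟩,
      List.forall_mem_cons.mpr ⟨hsorted, hP.sorted⟩,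
      List.pairwise_cons.mpr ⟨?_, hP.head_le⟩⟩
    rintro q hq _ ⟨⟩ y hy
    exact hhead y (List.mem_flatten.mpr ⟨q, hq, hy⟩)

lemma PSinsert_flatten_perm (c : ℕ) (P : List (List ℕ)) :
    (PSinsert c P).flatten.Perm (c :: P.flatten) := by
  induction P with
  | nil => simp [PSinsert]
  | cons p P ih =>
    match p with
    | [] => simpa [PSinsert] using ih
    | x :: p =>
      unfold PSinsert
      split
      · rfl
      · simpa using ((ih.append_left (x :: p)).trans List.perm_middle)

lemma PSinsert_append_of_topsLE {c : ℕ} {P : List (List ℕ)} (hP : TopsLE P [c])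
    (Q : List (List ℕ)) : PSinsert c (P ++ Q) = P ++ PSinsert c Q := by
  induction P with
  | nil => rfl
  | cons p P ih =>
    obtain ⟨a, ha, hac⟩ := hP p List.mem_cons_self
    obtain ⟨p, rfl⟩ : ∃ p', p = a :: p' := List.head?_eq_some_iff.mp ha
    have hca : ¬c < a := not_lt.mpr (hac c List.mem_cons_self)
    simp only [List.cons_append, PSinsert, if_neg hca,
      ih fun q hq => hP q (List.mem_cons_of_mem _ hq)]

lemma foldl_PSinsert_reverse_of_sorted {P : List (List ℕ)} :
    ∀ {a : ℕ} {t : List ℕ}, (a :: t).Pairwise (· < ·) → TopsLE P (a :: t) →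
      (a :: t).reverse.foldl (fun ps c => PSinsert c ps) P = P ++ [a :: t]
  | a, [], _, hP => by
    simpa [PSinsert] using PSinsert_append_of_topsLE hP []
  | a, b :: t, hsorted, hP => by
    have hab : a < b := List.rel_of_pairwise_cons hsorted List.mem_cons_self
    have hbt := foldl_PSinsert_reverse_of_sorted hsorted.of_cons
      (hP.mono (List.subset_cons_self _ _))
    rw [List.reverse_cons, List.foldl_append, hbt, List.foldl_cons, List.foldl_nil,
      PSinsert_append_of_topsLE (hP.mono (by simp))]
    simp [PSinsert, hab]

lemma foldl_PSinsert_RPW {P : List (List ℕ)} (hP : IsPileConfig P) :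
    ∀ {A : List (List ℕ)}, TopsLE A P.flatten →
      (RPW P).foldl (fun ps c => PSinsert c ps) A = A ++ P := by
  induction P with
  | nil => simp [RPW]
  | cons r P ih =>
    intro A hA
    obtain ⟨a, t, rfl⟩ := List.exists_cons_of_ne_nil (hP.ne_nil r List.mem_cons_self)
    obtain ⟨hsorted, hhead, hrest⟩ := isPileConfig_cons_cons.mp hP
    have hAr : TopsLE (A ++ [a :: t]) P.flatten := by
      intro p hp
      rcases List.mem_append.mp hp with hp | hp
      · exact (hA.mono (by simp)) p hp
      · obtain rfl := List.mem_singleton.mp hp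
        exact ⟨a, rfl, hhead⟩
    have hRPW : RPW ((a :: t) :: P) = (a :: t).reverse ++ RPW P := by simp [RPW]
    rw [hRPW, List.foldl_append, foldl_PSinsert_reverse_of_sorted hsorted (hA.mono (by simp)),
      ih hrest hAr, List.append_assoc, List.singleton_append]

lemma isPileConfig_PSinsert (c : ℕ) {P : List (List ℕ)} (hP : IsPileConfig P) :
    IsPileConfig (PSinsert c P) := by
  induction P with
  | nil => simp [PSinsert, IsPileConfig.mk]
  | cons p P ih =>
    obtain ⟨x, p, rfl⟩ := List.exists_cons_of_ne_nil (hP.ne_nil p List.mem_cons_self)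
    obtain ⟨hsorted, hhead, hrest⟩ := isPileConfig_cons_cons.mp hP
    unfold PSinsert
    split
    case isTrue hcx =>
      refine isPileConfig_cons_cons.mpr ⟨List.pairwise_cons.mpr ⟨fun y hy => ?_, hsorted⟩,
        fun y hy => hcx.le.trans (hhead y hy), hrest⟩
      rcases List.mem_cons.mp hy with rfl | hy
      · exact hcx
      · exact hcx.trans (List.rel_of_pairwise_cons hsorted hy)
    case isFalse hxc =>
      refine isPileConfig_cons_cons.mpr ⟨hsorted, fun y hy => ?_, ih hrest⟩
      rcases List.mem_cons.mp ((PSinsert_flatten_perm c P).mem_iff.mp hy) with rfl | hy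
      · exact not_lt.mp hxc
      · exact hhead y hy

lemma isPileConfig_PSpiles (w : List ℕ) : IsPileConfig (PSpiles w) := by
  suffices ∀ P, IsPileConfig P → IsPileConfig (w.foldl (fun ps c => PSinsert c ps) P) from
    this [] ⟨by simp, by simp, List.Pairwise.nil⟩
  induction w with
  | nil => exact fun _ h => h
  | cons c w ih => exact fun P h => ih _ (isPileConfig_PSinsert c h)

lemma PSpiles_RPW {P : List (List ℕ)} (hP : IsPileConfig P) : PSpiles (RPW P) = P :=
  foldl_PSinsert_RPW hP (A := []) (by simp [TopsLE])

/-- For every permutation `σ` of `{1,…,n}`, applying Patience Sorting to the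
reverse patience word of the pile configuration of `σ` returns the same pile
configuration: `R(RPW(R(σ))) = R(σ)`. -/
theorem stmt2 (n : ℕ) (σ : Equiv.Perm (Fin n)) :
    PSpiles (RPW (PSpiles (permWord σ))) = PSpiles (permWord σ) :=
  PSpiles_RPW (isPileConfig_PSpiles _)
end

section
/- Two permutations σ, τ of {1,…,n} have the same pile configuration under Patience Sorting, R(σ) = R(τ), if and only if σ and τ are related by the equivalence relation generated by allowed interchanges; that is, if and only if there is a finite sequence of permutations starting at σ and ending at τ in which each permutation is obtained from the previous one by an allowed interchange or the inverse of an allowed interchange. -/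
/-- `AllowedInterchange σ τ`: `τ` is obtained from `σ` by swapping the adjacent entries
`σ(j), σ(j+1)` of an occurrence `i < j` of the generalized pattern 2-31
(`σ(j+1) < σ(i) < σ(j)`) that is not contained in any occurrence of 3-1-42
(there is no `k` with `i < k < j` and `σ(k) < σ(j+1)`). -/
def AllowedInterchange {n : ℕ} (σ τ : Equiv.Perm (Fin n)) : Prop :=
  ∃ (i j : ℕ) (hi : i < n) (hj : j + 1 < n),
    i < j ∧
    σ ⟨j + 1, hj⟩ < σ ⟨i, hi⟩ ∧ σ ⟨i, hi⟩ < σ ⟨j, Nat.lt_of_succ_lt hj⟩ ∧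
    (¬ ∃ (k : ℕ) (hk : k < n), i < k ∧ k < j ∧ σ ⟨k, hk⟩ < σ ⟨j + 1, hj⟩) ∧
    τ = σ * Equiv.swap ⟨j, Nat.lt_of_succ_lt hj⟩ ⟨j + 1, hj⟩

def PSpilesFrom (P : List (List ℕ)) (w : List ℕ) : List (List ℕ) :=
  w.foldl (fun ps c => PSinsert c ps) P

@[simp] lemma PSpilesFrom_cons (P : List (List ℕ)) (c : ℕ) (w : List ℕ) :
    PSpilesFrom P (c :: w) = PSpilesFrom (PSinsert c P) w := rfl

lemma PSpiles_append (w w' : List ℕ) : PSpiles (w ++ w') = PSpilesFrom (PSpiles w) w' :=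
  List.foldl_append

-- An empty pile gets the junk top `0`, which never lies strictly above a card.
def tops (P : List (List ℕ)) : List ℕ := P.map List.headI

lemma mem_tops_PSinsert {c t : ℕ} : ∀ {P : List (List ℕ)},
    t ∈ tops (PSinsert c P) → t = c ∨ t ∈ tops P
  | [] => by simp [tops, PSinsert]
  | [] :: P => by
    simp only [PSinsert, tops, List.map_cons, List.mem_cons]
    rintro (rfl | h)
    · exact .inr (.inl rfl)
    · exact (mem_tops_PSinsert h).imp_right .inr
  | (x :: p) :: P => by
    unfold PSinsert
    split_ifs
    · simp only [tops, List.map_cons, List.headI_cons, List.mem_cons]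
      tauto
    · simp only [tops, List.map_cons, List.headI_cons, List.mem_cons]
      rintro (rfl | h)
      · exact .inr (.inl rfl)
      · exact (mem_tops_PSinsert h).imp_right .inr

lemma tops_PSinsert_sorted {c : ℕ} : ∀ {P : List (List ℕ)},
    (tops P).Pairwise (· ≤ ·) → (tops (PSinsert c P)).Pairwise (· ≤ ·)
  | [], _ => by simp [tops, PSinsert]
  | [] :: P, h => by
    simp only [PSinsert, tops, List.map_cons, List.headI_nil, List.pairwise_cons] at h ⊢
    exact ⟨fun _ _ => Nat.zero_le _, tops_PSinsert_sorted h.2⟩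
  | (x :: p) :: P, h => by
    simp only [tops, List.map_cons, List.headI_cons, List.pairwise_cons] at h
    unfold PSinsert
    split_ifs with hcx
    · simp only [tops, List.map_cons, List.headI_cons, List.pairwise_cons]
      exact ⟨fun t ht => hcx.le.trans (h.1 t ht), h.2⟩
    · simp only [tops, List.map_cons, List.headI_cons, List.pairwise_cons]
      refine ⟨fun t ht => ?_, tops_PSinsert_sorted h.2⟩
      rcases mem_tops_PSinsert ht with rfl | ht
      · exact not_lt.1 hcx
      · exact h.1 t ht

lemma tops_PSpilesFrom_sorted : ∀ (w : List ℕ) {P : List (List ℕ)},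
    (tops P).Pairwise (· ≤ ·) → (tops (PSpilesFrom P w)).Pairwise (· ≤ ·)
  | [], _, h => h
  | _ :: w, _, h => tops_PSpilesFrom_sorted w (tops_PSinsert_sorted h)

lemma tops_PSpiles_sorted (w : List ℕ) : (tops (PSpiles w)).Pairwise (· ≤ ·) :=
  tops_PSpilesFrom_sorted w List.Pairwise.nil

lemma mem_tops_PSinsert_self (c : ℕ) : ∀ P : List (List ℕ), c ∈ tops (PSinsert c P)
  | [] => by simp [tops, PSinsert]
  | [] :: P => List.mem_cons_of_mem _ (mem_tops_PSinsert_self c P)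
  | (x :: p) :: P => by
    unfold PSinsert
    split_ifs
    · exact List.mem_cons_self
    · exact List.mem_cons_of_mem _ (mem_tops_PSinsert_self c P)

lemma mem_tops_PSinsert_of_mem {c t : ℕ} : ∀ {P : List (List ℕ)},
    t ∈ tops P → t ∈ tops (PSinsert c P) ∨ c < t
  | [], h => by simp [tops] at h
  | [] :: P, h => by
    simp only [PSinsert, tops, List.map_cons, List.mem_cons] at h ⊢
    rcases h with rfl | h
    · exact .inl (.inl rfl)
    · exact (mem_tops_PSinsert_of_mem h).imp_left .inr
  | (x :: p) :: P, h => by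
    simp only [tops, List.map_cons, List.headI_cons, List.mem_cons] at h
    unfold PSinsert
    split_ifs with hcx
    · simp only [tops, List.map_cons, List.headI_cons, List.mem_cons]
      rcases h with rfl | h
      · exact .inr hcx
      · exact .inl (.inr h)
    · simp only [tops, List.map_cons, List.headI_cons, List.mem_cons]
      rcases h with rfl | h
      · exact .inl (.inl rfl)
      · exact (mem_tops_PSinsert_of_mem h).imp_left .inr

lemma exists_top_between_PSinsert {a b c : ℕ} (hac : a < c) {P : List (List ℕ)}
    (h : ∃ t ∈ tops P, a < t ∧ t < b) : ∃ t ∈ tops (PSinsert c P), a < t ∧ t < b := by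
  obtain ⟨t, ht, hat, htb⟩ := h
  rcases mem_tops_PSinsert_of_mem (c := c) ht with ht' | hct
  · exact ⟨t, ht', hat, htb⟩
  · exact ⟨c, mem_tops_PSinsert_self c P, hac, hct.trans htb⟩

lemma exists_top_between_PSpilesFrom {a b : ℕ} : ∀ {w : List ℕ} {P : List (List ℕ)},
    (∀ z ∈ w, a < z) → (∃ t ∈ tops P, a < t ∧ t < b) →
      ∃ t ∈ tops (PSpilesFrom P w), a < t ∧ t < b
  | [], _, _, h => h
  | c :: w, _, hw, h =>
    exists_top_between_PSpilesFrom (w := w) (fun z hz => hw z (List.mem_cons_of_mem c hz))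
      (exists_top_between_PSinsert (hw c List.mem_cons_self) h)

lemma PSinsert_comm {a b : ℕ} : ∀ {P : List (List ℕ)}, (tops P).Pairwise (· ≤ ·) →
    (∃ t ∈ tops P, a < t ∧ t < b) → PSinsert a (PSinsert b P) = PSinsert b (PSinsert a P)
  | [], _, ⟨t, ht, _⟩ => by simp [tops] at ht
  | [] :: P, hs, ⟨t, ht, hat, htb⟩ => by
    simp only [tops, List.map_cons, List.headI_nil, List.mem_cons, List.pairwise_cons] at ht hs
    rcases ht with rfl | ht
    · exact absurd hat (Nat.not_lt_zero a)
    · simp only [PSinsert, PSinsert_comm hs.2 ⟨t, ht, hat, htb⟩]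
  | (x :: p) :: P, hs, ⟨t, ht, hat, htb⟩ => by
    simp only [tops, List.map_cons, List.headI_cons, List.mem_cons, List.pairwise_cons] at ht hs
    have hab : a < b := hat.trans htb
    rcases le_or_gt x a with hxa | hax
    · have ht' : t ∈ tops P := ht.resolve_left (by omega)
      simp only [PSinsert, if_neg (not_lt.2 hxa), if_neg (not_lt.2 (hxa.trans hab.le)),
        PSinsert_comm hs.2 ⟨t, ht', hat, htb⟩]
    · have hxb : x ≤ b := by
        rcases ht with rfl | ht
        · exact htb.le
        · exact ((hs.1 t ht).trans htb.le)
      simp only [PSinsert, if_pos hax, if_neg (not_lt.2 hxb), if_neg (not_lt.2 hab.le)]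

-- `AllowedInterchange` read on words: `y m b a ↦ y m a b`, with `y` and `b a` the 2-31 occurrence
-- and `∀ z ∈ m, a < z` saying that it lies in no 3-1-42.
def WordInterchange (w w' : List ℕ) : Prop :=
  ∃ u y m b a v, w = u ++ y :: m ++ b :: a :: v ∧ w' = u ++ y :: m ++ a :: b :: v ∧
    a < y ∧ y < b ∧ ∀ z ∈ m, a < z

lemma PSpiles_eq_of_wordInterchange {w w' : List ℕ} (h : WordInterchange w w') :
    PSpiles w = PSpiles w' := by
  obtain ⟨u, y, m, b, a, v, rfl, rfl, hay, hyb, hm⟩ := h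
  have hsep : ∃ t ∈ tops (PSpiles (u ++ y :: m)), a < t ∧ t < b := by
    rw [PSpiles_append, PSpilesFrom_cons]
    exact exists_top_between_PSpilesFrom hm ⟨y, mem_tops_PSinsert_self _ _, hay, hyb⟩
  rw [PSpiles_append, PSpiles_append (u ++ y :: m), PSpilesFrom_cons, PSpilesFrom_cons,
    PSpilesFrom_cons, PSpilesFrom_cons, PSinsert_comm (tops_PSpiles_sorted _) hsep]

lemma WordInterchange.cons {w w' : List ℕ} (x : ℕ) (h : WordInterchange w w') :
    WordInterchange (x :: w) (x :: w') := by
  obtain ⟨u, y, m, b, a, v, rfl, rfl, hay, hyb, hm⟩ := h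
  exact ⟨x :: u, y, m, b, a, v, rfl, rfl, hay, hyb, hm⟩

lemma WordInterchange.lt {w w' : List ℕ} (h : WordInterchange w w') : w' < w := by
  obtain ⟨u, y, m, b, a, v, rfl, rfl, hay, hyb, -⟩ := h
  exact List.Lex.append_left _ (List.Lex.rel (hay.trans hyb)) _

lemma PSpilesFrom_cons_of_forall_le {h : ℕ} {p : List ℕ} :
    ∀ {w : List ℕ} {Q : List (List ℕ)}, (∀ x ∈ w, h ≤ x) → PSpilesFrom ((h :: p) :: Q) w = (h :: p) :: PSpilesFrom Q w
  | [], _, _ => rfl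
  | c :: w, Q, hw => by
    rw [PSpilesFrom_cons, PSinsert, if_neg (not_lt.2 (hw c List.mem_cons_self)),
      PSpilesFrom_cons_of_forall_le (w := w) fun x hx => hw x (List.mem_cons_of_mem c hx)]
    rfl

-- The first letter `a < c` of `w` would complete an occurrence `c … b' a` (with `b'` its
-- predecessor) of 2-31 in no 3-1-42.
lemma lt_of_forall_not_wordInterchange {c : ℕ} : ∀ {m : List ℕ} {b : ℕ} {w : List ℕ},
    (c :: m ++ b :: w).Nodup → (∀ w', ¬ WordInterchange (c :: m ++ b :: w) w') → c < b →
      (∀ z ∈ m, c < z) → ∀ x ∈ w, c < x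
  | _, _, [], _, _, _, _ => by simp
  | m, b, x :: w, hnd, hirr, hcb, hm => by
    have hne : x ≠ c := by
      rintro rfl
      simp at hnd
    rcases lt_or_gt_of_ne hne with hxc | hcx
    · exact absurd ⟨[], c, m, b, x, w, rfl, rfl, hxc, hcb, fun z hz => hxc.trans (hm z hz)⟩
        (hirr _)
    · have hw := lt_of_forall_not_wordInterchange (m := m ++ [b]) (w := w)
        (by simpa using hnd) (by simpa using hirr) hcx
        (by simpa [or_imp, forall_and] using ⟨hm, hcb⟩)
      simpa [hcx] using hw

lemma PSpilesFrom_map_reverse_flatten : ∀ (w : List ℕ) (c : ℕ) (t : List ℕ),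
    (c :: w).Nodup → (∀ w', ¬ WordInterchange (c :: w) w') →
      ((PSpilesFrom [c :: t] w).map List.reverse).flatten = t.reverse ++ c :: w
  | [], _, _, _, _ => by simp [PSpilesFrom]
  | d :: w, c, t, hnd, hirr => by
    have hirr' : ∀ w', ¬ WordInterchange (d :: w) w' := fun w' h => hirr _ (h.cons c)
    have hcd : c ≠ d := fun h => by simp [h] at hnd
    rcases lt_or_gt_of_ne hcd with hcd | hdc
    · have hw : ∀ x ∈ w, c < x :=
        lt_of_forall_not_wordInterchange (m := []) hnd hirr hcd (by simp)
      rw [PSpilesFrom_cons_of_forall_le (w := d :: w) (Q := []) (by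
        simpa [hcd.le] using fun x hx => (hw x hx).le)]
      simpa [PSinsert] using PSpilesFrom_map_reverse_flatten w d [] hnd.of_cons hirr'
    · rw [PSpilesFrom_cons, PSinsert, if_pos hdc,
        PSpilesFrom_map_reverse_flatten w d (c :: t) hnd.of_cons hirr']
      simp

lemma PSpiles_map_reverse_flatten {w : List ℕ} (hnd : w.Nodup)
    (hirr : ∀ w', ¬ WordInterchange w w') : ((PSpiles w).map List.reverse).flatten = w := by
  cases w with
  | nil => rfl
  | cons c w => exact PSpilesFrom_map_reverse_flatten w c [] hnd hirr

lemma List.take_eq_take_append_getElem_cons {α : Type*} (l : List α) {i j : ℕ} (hij : i < j)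
    (hj : j ≤ l.length) : l.take j = l.take i ++ l[i] :: (l.take j).drop (i + 1) := by
  conv_lhs => rw [← List.take_append_drop i (l.take j)]
  rw [List.take_take, min_eq_left hij.le, List.drop_eq_getElem_cons (by simp; omega),
    List.getElem_take]

lemma List.eq_take_append_getElem_cons_getElem_cons {α : Type*} (l : List α) {j : ℕ}
    (hj : j + 1 < l.length) : l = l.take j ++ l[j] :: l[j + 1] :: l.drop (j + 2) := by
  conv_lhs => rw [← List.take_append_drop j l]
  rw [List.drop_eq_getElem_cons (by omega), List.drop_eq_getElem_cons hj]

section Permutations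

variable {n : ℕ}

lemma permWord_length (σ : Equiv.Perm (Fin n)) : (permWord σ).length = n := by
  simp [permWord]

lemma permWord_getElem (σ : Equiv.Perm (Fin n)) {k : ℕ} (hk : k < (permWord σ).length) :
    (permWord σ)[k] = (σ ⟨k, by simpa [permWord_length] using hk⟩ : ℕ) + 1 := by
  simp [permWord]

lemma permWord_injective : Function.Injective (permWord (n := n)) := by
  intro σ τ h
  ext i
  simpa using congrFun (List.ofFn_inj.1 h) i

lemma permWord_nodup (σ : Equiv.Perm (Fin n)) : (permWord σ).Nodup :=
  List.nodup_ofFn.2 fun i k h => σ.injective (Fin.ext (by simpa using h))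

lemma permWord_mul_swap {j : ℕ} (σ : Equiv.Perm (Fin n)) (hj : j + 1 < n) :
    permWord (σ * Equiv.swap ⟨j, Nat.lt_of_succ_lt hj⟩ ⟨j + 1, hj⟩) =
      (permWord σ).take j ++ ((σ ⟨j + 1, hj⟩ : ℕ) + 1) ::
        ((σ ⟨j, Nat.lt_of_succ_lt hj⟩ : ℕ) + 1) :: (permWord σ).drop (j + 2) := by
  apply List.ext_getElem
  · simp [permWord_length]; omega
  · intro k hk _
    rw [permWord_getElem, Equiv.Perm.mul_apply, Equiv.swap_apply_def]
    have hjn : min j n = j := by omega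
    simp only [List.getElem_append, List.getElem_cons, List.getElem_take, List.getElem_drop,
      permWord_getElem, Fin.ext_iff, List.length_take, permWord_length, hjn]
    split_ifs <;> first | omega | (congr 3; ext; simp only; omega)

lemma AllowedInterchange.wordInterchange {σ τ : Equiv.Perm (Fin n)}
    (h : AllowedInterchange σ τ) : WordInterchange (permWord σ) (permWord τ) := by
  obtain ⟨i, j, hi, hj, hij, hlt, hgt, hblk, rfl⟩ := h
  have hlen := permWord_length σ
  set w := permWord σ
  have hpre := w.take_eq_take_append_getElem_cons hij (by omega)
  have hw := w.eq_take_append_getElem_cons_getElem_cons (j := j) (by omega)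
  rw [permWord_getElem, permWord_getElem] at hw
  rw [permWord_getElem] at hpre
  refine ⟨w.take i, (σ ⟨i, hi⟩ : ℕ) + 1, (w.take j).drop (i + 1), (σ ⟨j, by omega⟩ : ℕ) + 1,
    (σ ⟨j + 1, hj⟩ : ℕ) + 1, w.drop (j + 2), ?_, ?_, ?_, ?_, ?_⟩
  · rw [← hpre]; exact hw
  · rw [permWord_mul_swap, ← hpre]
  · exact Nat.succ_lt_succ hlt
  · exact Nat.succ_lt_succ hgt
  · intro z hz
    obtain ⟨k, hk, rfl⟩ := List.mem_iff_getElem.1 hz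
    simp only [List.length_drop, List.length_take] at hk
    rw [List.getElem_drop, List.getElem_take, permWord_getElem]
    have hne : (σ ⟨i + 1 + k, by omega⟩ : ℕ) ≠ σ ⟨j + 1, hj⟩ := by
      rw [Ne, Fin.val_inj, σ.injective.eq_iff, Fin.mk.injEq]; omega
    have hnlt : ¬ σ ⟨i + 1 + k, by omega⟩ < σ ⟨j + 1, hj⟩ :=
      fun h => hblk ⟨_, _, by omega, by omega, h⟩
    rw [Fin.lt_def] at hnlt
    omega

lemma exists_allowedInterchange_of_wordInterchange {σ : Equiv.Perm (Fin n)}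
    {w' : List ℕ} (h : WordInterchange (permWord σ) w') : ∃ τ, AllowedInterchange σ τ := by
  obtain ⟨u, y, m, b, a, v, hw, -, hay, hyb, hm⟩ := h
  have hlen : u.length + m.length + 3 + v.length = n := by
    rw [← permWord_length σ, hw]; simp; omega
  have hy : (σ ⟨u.length, by omega⟩ : ℕ) + 1 = y := by
    rw [← permWord_getElem σ (by rw [permWord_length]; omega)]
    exact List.getElem_of_append (l₂ := m ++ b :: a :: v) (by simp [hw]) rfl
  have hb : (σ ⟨u.length + m.length + 1, by omega⟩ : ℕ) + 1 = b := by
    rw [← permWord_getElem σ (by rw [permWord_length]; omega)]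
    exact List.getElem_of_append (l₁ := u ++ y :: m) (l₂ := a :: v) (by simp [hw])
      (by simp; omega)
  have ha : (σ ⟨u.length + m.length + 1 + 1, by omega⟩ : ℕ) + 1 = a := by
    rw [← permWord_getElem σ (by rw [permWord_length]; omega)]
    exact List.getElem_of_append (l₁ := u ++ y :: m ++ [b]) (l₂ := v) (by simp [hw])
      (by simp; omega)
  have hmid : ∀ k (hk : k < n), u.length < k → k < u.length + m.length + 1 →
      (σ ⟨k, hk⟩ : ℕ) + 1 ∈ m := by
    intro k hk hk1 hk2
    rw [← permWord_getElem σ (by rw [permWord_length]; omega)]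
    rw [List.getElem_of_eq hw, List.getElem_append_left (by simp; omega),
      List.getElem_append_right (by omega), List.getElem_cons (by simp; omega),
      dif_neg (by omega)]
    exact List.getElem_mem _
  refine ⟨_, u.length, u.length + m.length + 1, by omega, by omega, by omega, ?_, ?_, ?_, rfl⟩
  · rw [Fin.lt_def]; omega
  · rw [Fin.lt_def]; omega
  · rintro ⟨k, hk, hk1, hk2, hlt⟩
    have := hm _ (hmid k hk hk1 hk2)
    rw [Fin.lt_def] at hlt
    omega

lemma AllowedInterchange.PSpiles_eq {σ τ : Equiv.Perm (Fin n)}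
    (h : AllowedInterchange σ τ) : PSpiles (permWord σ) = PSpiles (permWord τ) :=
  PSpiles_eq_of_wordInterchange h.wordInterchange

lemma PSpiles_eq_of_reflTransGen {σ τ : Equiv.Perm (Fin n)}
    (h : Relation.ReflTransGen (Relation.SymmGen AllowedInterchange) σ τ) :
    PSpiles (permWord σ) = PSpiles (permWord τ) := by
  induction h with
  | refl => rfl
  | tail _ hst ih => exact ih.trans (hst.elim (·.PSpiles_eq) (·.PSpiles_eq.symm))

lemma wellFounded_allowedInterchange :
    WellFounded fun τ σ : Equiv.Perm (Fin n) => AllowedInterchange σ τ := by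
  have : IsTrans _ fun τ σ : Equiv.Perm (Fin n) => permWord τ < permWord σ :=
    ⟨fun _ _ _ => lt_trans⟩
  have : Std.Irrefl fun τ σ : Equiv.Perm (Fin n) => permWord τ < permWord σ :=
    ⟨fun _ => lt_irrefl _⟩
  exact Subrelation.wf (fun h => h.wordInterchange.lt)
    (Finite.wellFounded_of_trans_of_irrefl _)

lemma exists_reflTransGen_forall_not_allowedInterchange (σ : Equiv.Perm (Fin n)) :
    ∃ ρ, Relation.ReflTransGen AllowedInterchange σ ρ ∧ ∀ τ, ¬ AllowedInterchange ρ τ := by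
  obtain ⟨ρ, hσρ, hmin⟩ := wellFounded_allowedInterchange.has_min
    {ρ | Relation.ReflTransGen AllowedInterchange σ ρ} ⟨σ, .refl⟩
  exact ⟨ρ, hσρ, fun τ h => hmin τ (hσρ.tail h) h⟩

lemma eq_of_PSpiles_eq_of_forall_not_allowedInterchange {σ τ : Equiv.Perm (Fin n)}
    (hσ : ∀ ρ, ¬ AllowedInterchange σ ρ) (hτ : ∀ ρ, ¬ AllowedInterchange τ ρ)
    (h : PSpiles (permWord σ) = PSpiles (permWord τ)) : σ = τ := by
  have hirr {π : Equiv.Perm (Fin n)} (hπ : ∀ ρ, ¬ AllowedInterchange π ρ) (w' : List ℕ)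
      (hw : WordInterchange (permWord π) w') : False :=
    (exists_allowedInterchange_of_wordInterchange hw).elim hπ
  apply permWord_injective
  rw [← PSpiles_map_reverse_flatten (permWord_nodup σ) (hirr hσ), h,
    PSpiles_map_reverse_flatten (permWord_nodup τ) (hirr hτ)]

end Permutations

/-- Two permutations have the same pile configuration under Patience Sorting
if and only if they are related by the equivalence relation generated by allowed
interchanges, i.e., connected by a finite chain of allowed interchanges and their inverses. -/
theorem stmt6 (n : ℕ) (σ τ : Equiv.Perm (Fin n)) :
    PSpiles (permWord σ) = PSpiles (permWord τ) ↔
    Relation.ReflTransGen (fun a b => AllowedInterchange a b ∨ AllowedInterchange b a) σ τ := by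
  refine ⟨fun h => ?_, PSpiles_eq_of_reflTransGen⟩
  obtain ⟨ρ, hσρ, hρ⟩ := exists_reflTransGen_forall_not_allowedInterchange σ
  obtain ⟨ρ', hτρ', hρ'⟩ := exists_reflTransGen_forall_not_allowedInterchange τ
  replace hσρ := Relation.ReflTransGen.mono (fun _ _ => Relation.SymmGen.of_rel) _ _ hσρ
  replace hτρ' := Relation.ReflTransGen.mono (fun _ _ => Relation.SymmGen.of_rel) _ _ hτρ'
  obtain rfl : ρ = ρ' := eq_of_PSpiles_eq_of_forall_not_allowedInterchange hρ hρ' <| by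
    rw [← PSpiles_eq_of_reflTransGen hσρ, h, PSpiles_eq_of_reflTransGen hτρ']
  exact hσρ.trans (symm_of _ hτρ')
end

section
/- Extended Patience Sorting has the Schützenberger-type symmetry property: for every permutation σ of {1,…,n}, the insertion and recording piles of the inverse permutation are obtained by swapping those of σ, i.e., R(σ⁻¹) = S(σ) and S(σ⁻¹) = R(σ) (as ordered sequences of piles). -/
/-- The recording piles `S(w)` of Extended Patience Sorting: the `j`-th recording pile is
the set of (1-based) positions `i` whose value `w(i)` lies in the `j`-th insertion pile,
listed in increasing order from top to bottom (so, like the insertion piles, each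
recording pile is stored top-first as an increasing list). -/
def Spiles (w : List ℕ) : List (List ℕ) :=
  (PSpiles w).map fun p =>
    (List.range' 1 w.length).filter (fun i => decide (w.getD (i - 1) 0 ∈ p))

/-!
When card `w i` is dealt it lands on pile number `pileIndex w i`, one less than the length of the
longest increasing subsequence of `w` ending at position `i`: it must go to the right of every pile
holding a smaller earlier card, and it fits on top of the pile just after the rightmost of them.
So after `m` cards the `k`-th pile consists of the positions `i < m` with `pileIndex w i = k`,
latest (and smallest) card on top. For a permutation, `(j, i) ↦ (σ j, σ i)` maps increasing pairs
of positions of `σ` to those of `σ⁻¹`, whence `pileIndex σ⁻¹ (σ i) = pileIndex σ i`: the `k`-th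
insertion pile of `σ⁻¹` holds the values `i + 1` for the positions `i` in the `k`-th pile of `σ`,
which is the `k`-th recording pile of `σ`.
-/

namespace PatienceSorting

def pileIndex (w : List ℕ) (i : ℕ) : ℕ :=
  ((Finset.range i).filter (fun j => w.getD j 0 < w.getD i 0)).attach.sup
    fun j => pileIndex w j.1 + 1
termination_by i
decreasing_by exact Finset.mem_range.mp (Finset.mem_filter.mp j.2).1

variable {w : List ℕ} {i j k m : ℕ}

theorem pileIndex_eq (w : List ℕ) (i : ℕ) :
    pileIndex w i =
      ((Finset.range i).filter (fun j => w.getD j 0 < w.getD i 0)).sup (pileIndex w · + 1) := by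
  rw [pileIndex]
  exact Finset.sup_attach _ (pileIndex w · + 1)

theorem pileIndex_lt_of_lt (hji : j < i) (hv : w.getD j 0 < w.getD i 0) :
    pileIndex w j < pileIndex w i := by
  rw [pileIndex_eq w i]
  exact Nat.lt_of_succ_le <| Finset.le_sup (f := (pileIndex w · + 1)) <|
    Finset.mem_filter.mpr ⟨Finset.mem_range.mpr hji, hv⟩

theorem exists_pred_of_pileIndex_pos (h : 0 < pileIndex w i) :
    ∃ j < i, w.getD j 0 < w.getD i 0 ∧ pileIndex w j + 1 = pileIndex w i := by
  rw [pileIndex_eq] at h ⊢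
  set s := (Finset.range i).filter (fun j => w.getD j 0 < w.getD i 0)
  obtain ⟨j, hj, hsup⟩ := Finset.exists_mem_eq_sup s
    (Finset.nonempty_of_ne_empty fun h0 => by rw [h0, Finset.sup_empty] at h; exact h.false)
    (pileIndex w · + 1)
  obtain ⟨hji, hv⟩ := Finset.mem_filter.mp hj
  exact ⟨j, Finset.mem_range.mp hji, hv, hsup.symm⟩

theorem exists_lt_of_lt_pileIndex (hk : k < pileIndex w i) :
    ∃ j < i, w.getD j 0 < w.getD i 0 ∧ pileIndex w j = k := by
  induction i using Nat.strong_induction_on generalizing k with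
  | _ i ih =>
    obtain ⟨j, hji, hv, hj⟩ := exists_pred_of_pileIndex_pos (Nat.zero_lt_of_lt hk)
    rcases (Nat.lt_succ_iff.mp (hj ▸ hk)).lt_or_eq with hlt | rfl
    · obtain ⟨l, hlj, hv', hl⟩ := ih j hji hlt
      exact ⟨l, hlj.trans hji, hv'.trans hv, hl⟩
    · exact ⟨j, hji, hv, rfl⟩

def numPiles (w : List ℕ) (m : ℕ) : ℕ := (Finset.range m).sup (pileIndex w · + 1)

/-- The `k`-th pile, top first, after the first `m` cards of `w` have been dealt. -/
def pile (w : List ℕ) (m k : ℕ) : List ℕ :=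
  (((List.range m).filter (pileIndex w · = k)).reverse).map (w.getD · 0)

def piles (w : List ℕ) (m : ℕ) : List (List ℕ) := (List.range (numPiles w m)).map (pile w m)

theorem numPiles_succ (w : List ℕ) (m : ℕ) :
    numPiles w (m + 1) = max (pileIndex w m + 1) (numPiles w m) := by
  rw [numPiles, numPiles, Finset.range_add_one, Finset.sup_insert]

theorem pileIndex_lt_numPiles (h : i < m) : pileIndex w i < numPiles w m :=
  Nat.lt_of_succ_le <| Finset.le_sup (f := (pileIndex w · + 1)) (Finset.mem_range.mpr h)

theorem pileIndex_le_numPiles (w : List ℕ) (m : ℕ) : pileIndex w m ≤ numPiles w m := by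
  rw [pileIndex_eq]
  exact Finset.sup_mono (Finset.filter_subset _ _)

theorem exists_pileIndex_eq_of_lt_numPiles (h : k < numPiles w m) :
    ∃ j < m, pileIndex w j = k := by
  obtain ⟨i, hi, hk⟩ := (Finset.lt_sup_iff (f := (pileIndex w · + 1))).mp h
  rw [Finset.mem_range] at hi
  rcases (Nat.lt_succ_iff.mp hk).lt_or_eq with hlt | rfl
  · obtain ⟨j, hji, -, hj⟩ := exists_lt_of_lt_pileIndex hlt
    exact ⟨j, hji.trans hi, hj⟩
  · exact ⟨i, hi, rfl⟩

theorem mem_pile {x : ℕ} : x ∈ pile w m k ↔ ∃ i < m, pileIndex w i = k ∧ w.getD i 0 = x := by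
  simp [pile, and_assoc]

theorem pile_succ_self (w : List ℕ) (m : ℕ) :
    pile w (m + 1) (pileIndex w m) = w.getD m 0 :: pile w m (pileIndex w m) := by
  simp [pile, List.range_succ]

theorem pile_succ_of_ne (h : pileIndex w m ≠ k) : pile w (m + 1) k = pile w m k := by
  simp [pile, List.range_succ, h]

theorem pile_eq_nil_of_numPiles_le (h : numPiles w m ≤ k) : pile w m k = [] :=
  List.eq_nil_iff_forall_not_mem.mpr fun _ hx =>
    let ⟨_, hi, hk, _⟩ := mem_pile.mp hx
    (pileIndex_lt_numPiles hi).not_ge (hk ▸ h)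

theorem eq_of_getD_eq (hw : w.Nodup) (hi : i < w.length) (hj : j < w.length)
    (h : w.getD i 0 = w.getD j 0) : i = j := by
  rw [List.getD_eq_getElem _ _ hi, List.getD_eq_getElem _ _ hj] at h
  exact (hw.getElem_inj_iff).mp h

theorem getD_lt_of_pileIndex_eq (hw : w.Nodup) (hji : j < i) (hi : i < w.length)
    (h : pileIndex w i = pileIndex w j) : w.getD i 0 < w.getD j 0 := by
  refine lt_of_le_of_ne (not_lt.mp fun hlt => (pileIndex_lt_of_lt hji hlt).ne' h) fun heq => ?_
  exact hji.ne' (eq_of_getD_eq hw hi (hji.trans hi) heq)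

theorem pile_pairwise_lt (hw : w.Nodup) (hm : m ≤ w.length) : (pile w m k).Pairwise (· < ·) := by
  rw [pile, List.pairwise_map, List.pairwise_reverse]
  refine (List.pairwise_lt_range.filter _).imp_of_mem fun ha hb hab => ?_
  simp only [List.mem_filter, List.mem_range, decide_eq_true_eq] at ha hb
  exact getD_lt_of_pileIndex_eq hw hab (hb.1.trans_le hm) (hb.2.trans ha.2.symm)

theorem exists_eq_cons_le_of_mem {α : Type*} [Preorder α] {l : List α} {a : α}
    (hl : l.Pairwise (· < ·)) (ha : a ∈ l) :
    ∃ x t, l = x :: t ∧ x ≤ a := by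
  cases l with
  | nil => cases ha
  | cons x t =>
    refine ⟨x, t, rfl, ?_⟩
    rcases List.mem_cons.mp ha with rfl | ht
    · exact le_rfl
    · exact (List.rel_of_pairwise_cons hl ht).le

theorem pile_head_lt_of_lt_pileIndex (hw : w.Nodup) (hm : m ≤ w.length)
    (hk : k < pileIndex w m) :
    ∃ x t, pile w m k = x :: t ∧ x < w.getD m 0 := by
  obtain ⟨j, hjm, hv, hj⟩ := exists_lt_of_lt_pileIndex hk
  obtain ⟨x, t, hxt, hx⟩ :=
    exists_eq_cons_le_of_mem (pile_pairwise_lt hw hm) (mem_pile.mpr ⟨j, hjm, hj, rfl⟩)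
  exact ⟨x, t, hxt, hx.trans_lt hv⟩

theorem pile_head_gt_of_pileIndex_lt (hw : w.Nodup) (hm : m < w.length)
    (hk : pileIndex w m < numPiles w m) :
    ∃ x t, pile w m (pileIndex w m) = x :: t ∧ w.getD m 0 < x := by
  obtain ⟨j, hjm, hj⟩ := exists_pileIndex_eq_of_lt_numPiles hk
  obtain ⟨x, t, hxt, -⟩ :=
    exists_eq_cons_le_of_mem (pile_pairwise_lt hw hm.le) (mem_pile.mpr ⟨j, hjm, hj, rfl⟩)
  obtain ⟨i, him, hi, hix⟩ := mem_pile.mp (hxt ▸ List.mem_cons_self : x ∈ pile w m _)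
  exact ⟨x, t, hxt, hix ▸ getD_lt_of_pileIndex_eq hw him hm hi.symm⟩

theorem PSinsert_append_of_heads_lt {c : ℕ} {A : List (List ℕ)} (B : List (List ℕ))
    (hA : ∀ q ∈ A, ∃ x t, q = x :: t ∧ x < c) : PSinsert c (A ++ B) = A ++ PSinsert c B := by
  induction A with
  | nil => rfl
  | cons q A ih =>
    obtain ⟨x, t, rfl, hx⟩ := hA q List.mem_cons_self
    rw [List.cons_append, PSinsert, if_neg hx.not_gt,
      ih fun q hq => hA q (List.mem_cons_of_mem _ hq), List.cons_append]

theorem piles_succ (hw : w.Nodup) (hm : m < w.length) :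
    piles w (m + 1) = PSinsert (w.getD m 0) (piles w m) := by
  obtain ⟨r, hK⟩ := Nat.exists_eq_add_of_le (pileIndex_le_numPiles w m)
  have hleft : (List.range (pileIndex w m)).map (pile w (m + 1)) =
      (List.range (pileIndex w m)).map (pile w m) :=
    List.map_congr_left fun k hk => pile_succ_of_ne (List.mem_range.mp hk).ne'
  have hheads : ∀ q ∈ (List.range (pileIndex w m)).map (pile w m),
      ∃ x t, q = x :: t ∧ x < w.getD m 0 := by
    simp only [List.mem_map, List.mem_range]
    rintro q ⟨k, hk, rfl⟩
    exact pile_head_lt_of_lt_pileIndex hw hm.le hk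
  rw [piles, piles, numPiles_succ]
  cases r with
  | zero =>
    have hins := PSinsert_append_of_heads_lt [] hheads
    rw [List.append_nil] at hins
    have hK' : numPiles w m = pileIndex w m := hK
    rw [hK', max_eq_left (Nat.le_succ _), List.range_succ, List.map_append, hleft, hins,
      List.map_singleton, pile_succ_self, pile_eq_nil_of_numPiles_le hK'.le]
    rfl
  | succ r =>
    obtain ⟨x, t, hxt, hx⟩ := pile_head_gt_of_pileIndex_lt hw hm (by omega)
    rw [hK, max_eq_right (by omega), List.range_add, List.range_succ_eq_map]
    simp only [List.map_append, List.map_cons, List.map_map, Nat.add_zero]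
    rw [hleft, PSinsert_append_of_heads_lt _ hheads, pile_succ_self, hxt, PSinsert, if_pos hx]
    congr 2
    exact List.map_congr_left fun k _ => pile_succ_of_ne (by simp)

theorem PSpiles_take (hw : w.Nodup) (hm : m ≤ w.length) : PSpiles (w.take m) = piles w m := by
  induction m with
  | zero => rfl
  | succ m ih =>
    rw [List.take_add_one, List.getElem?_eq_getElem hm, Option.toList_some, PSpiles,
      List.foldl_append, ← PSpiles, ih (Nat.le_of_succ_le hm), piles_succ hw hm,
      List.getD_eq_getElem _ _ hm]
    rfl

theorem PSpiles_eq_piles (hw : w.Nodup) : PSpiles w = piles w w.length := by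
  rw [← PSpiles_take hw le_rfl, List.take_length]

theorem getD_mem_pile_iff (hw : w.Nodup) (hi : i < w.length) :
    w.getD i 0 ∈ pile w w.length k ↔ pileIndex w i = k := by
  refine ⟨fun h => ?_, fun h => mem_pile.mpr ⟨i, hi, h, rfl⟩⟩
  obtain ⟨j, hj, hjk, hji⟩ := mem_pile.mp h
  exact eq_of_getD_eq hw hj hi hji ▸ hjk

theorem Spiles_eq (hw : w.Nodup) : Spiles w = (List.range (numPiles w w.length)).map
    fun k => ((List.range w.length).filter (pileIndex w · = k)).map (· + 1) := by
  rw [Spiles, PSpiles_eq_piles hw, piles, List.map_map]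
  refine List.map_congr_left fun k _ => ?_
  rw [Function.comp_apply, List.range'_eq_map_range, List.filter_map]
  refine congrArg₂ List.map (funext fun i => Nat.add_comm 1 i) (List.filter_congr fun i hi => ?_)
  simp only [Function.comp_apply, Nat.add_sub_cancel_left, decide_eq_decide]
  exact getD_mem_pile_iff hw (List.mem_range.mp hi)

theorem length_permWord {n : ℕ} (σ : Equiv.Perm (Fin n)) : (permWord σ).length = n :=
  List.length_ofFn

theorem getD_permWord {n : ℕ} (σ : Equiv.Perm (Fin n)) (i : Fin n) :
    (permWord σ).getD i 0 = σ i + 1 := by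
  rw [List.getD_eq_getElem _ _ ((length_permWord σ).symm ▸ i.isLt)]
  simp [permWord]

theorem nodup_permWord {n : ℕ} (σ : Equiv.Perm (Fin n)) : (permWord σ).Nodup :=
  List.nodup_ofFn.mpr fun _ _ h => σ.injective (Fin.ext (Nat.succ_injective h))

theorem pileIndex_permWord_inv_le {n : ℕ} (σ : Equiv.Perm (Fin n)) (i : Fin n) :
    pileIndex (permWord σ⁻¹) (σ i) ≤ pileIndex (permWord σ) i := by
  induction i using WellFoundedLT.induction with
  | _ i ih =>
    rw [pileIndex_eq]
    refine Finset.sup_le fun v hv => ?_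
    obtain ⟨hvi, hlt⟩ := Finset.mem_filter.mp hv
    have hvn : v < n := (Finset.mem_range.mp hvi).trans (σ i).isLt
    set j := σ⁻¹ ⟨v, hvn⟩
    have hσj : (σ j : ℕ) = v := by simp [j]
    rw [← hσj, getD_permWord, getD_permWord] at hlt
    simp only [Equiv.Perm.coe_inv, Equiv.symm_apply_apply, add_lt_add_iff_right] at hlt
    have hw : (permWord σ).getD j 0 < (permWord σ).getD i 0 := by
      rw [getD_permWord, getD_permWord, hσj]
      exact Nat.succ_lt_succ (Finset.mem_range.mp hvi)
    calc pileIndex (permWord σ⁻¹) v + 1 = pileIndex (permWord σ⁻¹) (σ j) + 1 := by rw [hσj]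
      _ ≤ pileIndex (permWord σ) j + 1 := Nat.succ_le_succ (ih j hlt)
      _ ≤ pileIndex (permWord σ) i := pileIndex_lt_of_lt hlt hw

theorem pileIndex_permWord_inv {n : ℕ} (σ : Equiv.Perm (Fin n)) (i : Fin n) :
    pileIndex (permWord σ⁻¹) (σ i) = pileIndex (permWord σ) i := by
  refine le_antisymm (pileIndex_permWord_inv_le σ i) ?_
  simpa using pileIndex_permWord_inv_le σ⁻¹ (σ i)

theorem numPiles_permWord_inv {n : ℕ} (σ : Equiv.Perm (Fin n)) :
    numPiles (permWord σ⁻¹) n = numPiles (permWord σ) n := by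
  rw [numPiles, numPiles, ← Finset.sup_fin_univ, ← Finset.sup_fin_univ]
  conv_lhs => rw [← Finset.map_univ_equiv σ, Finset.sup_map]
  simp only [Function.comp_def, Equiv.coe_toEmbedding, pileIndex_permWord_inv]

theorem pile_permWord_inv {n : ℕ} (σ : Equiv.Perm (Fin n)) (k : ℕ) :
    pile (permWord σ⁻¹) n k =
      ((List.range n).filter (pileIndex (permWord σ) · = k)).map (· + 1) := by
  refine List.Pairwise.eq_of_mem_iff (r := (· < ·))
    (pile_pairwise_lt (nodup_permWord σ⁻¹) (length_permWord σ⁻¹).ge)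
    ((List.pairwise_lt_range.filter _).map _ fun _ _ => Nat.succ_lt_succ) fun x => ?_
  simp only [mem_pile, List.mem_map, List.mem_filter, List.mem_range, decide_eq_true_eq]
  constructor
  · rintro ⟨v, hv, hk, rfl⟩
    set i := σ⁻¹ ⟨v, hv⟩
    have hσi : (σ i : ℕ) = v := by simp [i]
    refine ⟨i, ⟨i.isLt, ?_⟩, ?_⟩
    · rw [← pileIndex_permWord_inv, hσi, hk]
    · rw [← hσi, getD_permWord]
      simp
  · rintro ⟨i, ⟨hi, hk⟩, rfl⟩
    refine ⟨σ ⟨i, hi⟩, (σ ⟨i, hi⟩).isLt, ?_, ?_⟩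
    · rw [pileIndex_permWord_inv, hk]
    · rw [getD_permWord]
      simp

theorem PSpiles_permWord_inv {n : ℕ} (σ : Equiv.Perm (Fin n)) :
    PSpiles (permWord σ⁻¹) = Spiles (permWord σ) := by
  rw [PSpiles_eq_piles (nodup_permWord σ⁻¹), Spiles_eq (nodup_permWord σ), piles,
    length_permWord, length_permWord, numPiles_permWord_inv]
  exact List.map_congr_left fun k _ => pile_permWord_inv σ k

end PatienceSorting

/-- Schützenberger-type symmetry of Extended Patience Sorting: for every
permutation `σ` of `{1,…,n}`, `R(σ⁻¹) = S(σ)` and `S(σ⁻¹) = R(σ)`, as ordered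
sequences of piles. -/
theorem stmt9 (n : ℕ) (σ : Equiv.Perm (Fin n)) :
    PSpiles (permWord σ⁻¹) = Spiles (permWord σ) ∧
    Spiles (permWord σ⁻¹) = PSpiles (permWord σ) :=
  ⟨PatienceSorting.PSpiles_permWord_inv σ, by
    simpa using (PatienceSorting.PSpiles_permWord_inv σ⁻¹).symm⟩
end
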